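/- Suppose F : [a,b] → ℝ is differentiable, F(x₁) = F(x₂) = 0 with a ≤ x₁ < x₂ ≤ b, F'(x₁) exists, and G(t) := F'(t)/F(t) is strictly decreasing on each interval where F(t) ≠ 0. If F has a critical point that is a negative local maximum or a positive local minimum strictly between x₁ and x₂, then we reach a contradiction; i.e., such a critical point cannot exist. -/
import Mathlib


open Real

lemma aux_neg_max (F : ℝ → ℝ) (a b x₁ x₂ : ℝ)
    (hdiff : DifferentiableOn ℝ F (Set.Icc a b))
    (hax₁ : a ≤ x₁) (hx₂b : x₂ ≤ b)
    (hF₁ : F x₁ = 0)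
    (hG : ∀ u v : ℝ, a ≤ u → u < v → v ≤ b → (∀ w ∈ Set.Icc u v, F w ≠ 0) →
      deriv F v / F v < deriv F u / F u)
    (y : ℝ) (hy1 : x₁ < y) (hy2 : y < x₂) (hdy : deriv F y = 0)
    (hmax : IsLocalMax F y) (hFy : F y < 0) : False := by
  have hc : ContinuousOn F (Set.Icc a b) := hdiff.continuousOn
  have hyb : y ≤ b := hy2.le.trans hx₂b
  set K : Set ℝ := Set.Icc x₁ y ∩ F ⁻¹' {0} with hK
  have hKclosed : IsClosed K :=
    (hc.mono (Set.Icc_subset_Icc hax₁ hyb)).preimage_isClosed_of_isClosed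
      isClosed_Icc isClosed_singleton
  have hKcompact : IsCompact K :=
    IsCompact.of_isClosed_subset isCompact_Icc hKclosed Set.inter_subset_left
  obtain ⟨z, ⟨⟨hz1, hz2⟩, hzF⟩, hzub⟩ :=
    hKcompact.exists_isGreatest ⟨x₁, ⟨le_refl _, hy1.le⟩, hF₁⟩
  have hzF : F z = 0 := hzF
  have haz : a ≤ z := hax₁.trans hz1
  have hzy : z < y := lt_of_le_of_ne hz2 (fun h => hFy.ne (h ▸ hzF))
  have hne : ∀ t ∈ Set.Ioc z y, F t ≠ 0 := by
    intro t ht h0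
    exact absurd (hzub ⟨⟨hz1.trans ht.1.le, ht.2⟩, h0⟩) (not_le.mpr ht.1)
  have hneg : ∀ t ∈ Set.Ioc z y, F t < 0 := by
    intro t ht
    rcases lt_trichotomy (F t) 0 with h | h | h
    · exact h
    · exact absurd h (hne t ht)
    · have hty : t < y := by
        rcases lt_or_eq_of_le ht.2 with h' | h'
        · exact h'
        · rw [h'] at h; linarith
      have hIcc : Set.Icc t y ⊆ Set.Icc a b :=
        Set.Icc_subset_Icc (haz.trans ht.1.le) hyb
      have := intermediate_value_Icc' hty.le (hc.mono hIcc)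
      obtain ⟨w, hw, hw0⟩ := this ⟨hFy.le, h.le⟩
      exact absurd hw0 (hne w ⟨ht.1.trans_le hw.1, hw.2⟩)
  obtain ⟨p, hpmem, hpmin⟩ :=
    isCompact_Icc.exists_isMinOn (Set.nonempty_Icc.mpr hzy.le)
      (hc.mono (Set.Icc_subset_Icc haz hyb))
  have hFp : F p ≤ F y := isMinOn_iff.mp hpmin y ⟨hzy.le, le_rfl⟩
  have hzp : z < p :=
    lt_of_le_of_ne hpmem.1 (fun h => by rw [← h] at hFp; linarith [hzF ▸ hFp])
  have hap : a ≤ p := haz.trans hzp.le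
  rcases lt_or_eq_of_le hpmem.2 with hpy | hpy
  · -- p < y : interior local min
    have hloc : IsLocalMin F p := hpmin.isLocalMin (Icc_mem_nhds hzp hpy)
    have hdp : deriv F p = 0 := hloc.deriv_eq_zero
    have := hG p y hap hpy hyb (fun w hw => hne w ⟨hzp.trans_le hw.1, hw.2⟩)
    rw [hdy, hdp, zero_div, zero_div] at this
    exact lt_irrefl 0 this
  · -- p = y : F constant near y on the left
    obtain ⟨ε, hε, hball⟩ := Metric.eventually_nhds_iff.mp hmax
    set m := max z (y - ε) with hm
    have hmy : m < y := max_lt hzy (by linarith)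
    have hconst : ∀ t ∈ Set.Ioo m y, F t = F y := by
      intro t ht
      have h1 : F t ≤ F y := by
        apply hball
        rw [Real.dist_eq, abs_lt]
        have h2' := lt_of_le_of_lt (le_max_right z (y - ε)) ht.1
        constructor <;> [linarith; linarith [ht.2, hε]]
      have h2 : F y ≤ F t := by
        rw [hpy] at hpmin
        exact isMinOn_iff.mp hpmin t
          ⟨(le_max_left z (y - ε)).trans ht.1.le, ht.2.le⟩
      linarith
    set u := (m + y) / 2 with hu
    have huI : u ∈ Set.Ioo m y := ⟨by rw [hu]; linarith, by rw [hu]; linarith⟩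
    have hequ : F =ᶠ[nhds u] fun _ => F y :=
      Filter.eventuallyEq_of_mem (Ioo_mem_nhds huI.1 huI.2) hconst
    have hdu : deriv F u = 0 := by rw [hequ.deriv_eq, deriv_const]
    have hmz : z ≤ m := le_max_left _ _
    have := hG u y (haz.trans (hmz.trans huI.1.le)) huI.2 hyb
      (fun w hw => hne w ⟨(hmz.trans_lt huI.1).trans_le hw.1, hw.2⟩)
    rw [hdy, hdu, zero_div, zero_div] at this
    exact lt_irrefl 0 this

/-- The Lehmer-phenomenon argument: let F be differentiable on [a,b] with zeros
x₁ < x₂ in [a,b], and suppose G = F'/F is strictly decreasing on every interval where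
F does not vanish. Then F cannot have a critical point in (x₁,x₂) which is a negative
local maximum or a positive local minimum. -/
theorem no_negative_local_max (F : ℝ → ℝ) (a b x₁ x₂ : ℝ)
    (hdiff : DifferentiableOn ℝ F (Set.Icc a b))
    (hax₁ : a ≤ x₁) (hx₁₂ : x₁ < x₂) (hx₂b : x₂ ≤ b)
    (hF₁ : F x₁ = 0) (hF₂ : F x₂ = 0)
    (hG : ∀ u v : ℝ, a ≤ u → u < v → v ≤ b → (∀ w ∈ Set.Icc u v, F w ≠ 0) →
      deriv F v / F v < deriv F u / F u) :
    ¬ ∃ y : ℝ, x₁ < y ∧ y < x₂ ∧ deriv F y = 0 ∧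
      ((IsLocalMax F y ∧ F y < 0) ∨ (IsLocalMin F y ∧ 0 < F y)) := by
  rintro ⟨y, hy1, hy2, hdy, hcase⟩
  rcases hcase with ⟨hmax, hFy⟩ | ⟨hmin, hFy⟩
  · exact aux_neg_max F a b x₁ x₂ hdiff hax₁ hx₂b hF₁ hG y hy1 hy2 hdy hmax hFy
  · -- apply aux to -F
    have hdneg : ∀ t, deriv (fun s => -F s) t = -deriv F t := fun t => deriv.neg
    refine aux_neg_max (fun s => -F s) a b x₁ x₂ hdiff.neg hax₁ hx₂b
      (by simp [hF₁]) ?_ y hy1 hy2 (by rw [hdneg, hdy, neg_zero])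
      hmin.neg (by simpa using hFy)
    intro u v hau huv hvb hne
    have hne' : ∀ w ∈ Set.Icc u v, F w ≠ 0 := fun w hw h => hne w hw (by simp [h])
    have := hG u v hau huv hvb hne'
    rw [hdneg, hdneg, neg_div_neg_eq, neg_div_neg_eq]
    exact this
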